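/- In the matched pair decomposition 𝔗Q = 𝔰 ⋈ 𝔫 and the dual decomposition 𝔗*Q = 𝔰* ⊕ 𝔫*, the dual of the left action of 𝔫 on 𝔰 is the right action (ρ, M) ⋆◁ X = (−X² ∗ M − div X² ⌟ M, 0) for X = Σ_{k≥2} X^k ∈ 𝔫 and (ρ, M) ∈ 𝔰* (a density ρ and a 1-form M), defined by ⟨(ρ, M) ⋆◁ X, (σ, Y)⟩ = ⟨(ρ, M), X ▷ (σ, Y)⟩. -/

import Mathlib

open MeasureTheory

noncomputable section

/-- Points of `Q`, in local coordinates. -/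
abbrev Coord (n : ℕ) : Type := Fin n → ℝ

/-- Partial derivative `∂f/∂q^ℓ`. -/
def pd {n : ℕ} (ℓ : Fin n) (f : Coord n → ℝ) : Coord n → ℝ :=
  fun q => fderiv ℝ f q (Pi.single ℓ 1)

/-- Coefficients of a second order symmetric contravariant tensor field. -/
abbrev TF2 (n : ℕ) : Type := Coord n → (Fin 2 → Fin n) → ℝ

/-- `X² ∗ M = 2 X^{iℓ} M_{i,ℓ}`, a function on `Q`. -/
def astM {n : ℕ} (X2 : TF2 n) (M : Coord n → Coord n) : Coord n → ℝ :=
  fun q => 2 * ∑ i : Fin n, ∑ ℓ : Fin n,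
    X2 q ![i, ℓ] * pd ℓ (fun q' => M q' i) q

/-- `div X² ⌟ M = 2 X^{ℓ i}_{,ℓ} M_i`, a function on `Q`. -/
def divContrM {n : ℕ} (X2 : TF2 n) (M : Coord n → Coord n) : Coord n → ℝ :=
  fun q => 2 * ∑ i : Fin n, ∑ ℓ : Fin n,
    pd ℓ (fun q' => X2 q' ![ℓ, i]) q * M q i

/-- Integral of a directional derivative of a smooth compactly supported function vanishes. -/
theorem integral_pd_eq_zero (n : ℕ) (h : Coord n → ℝ) (hs : ContDiff ℝ (⊤ : ℕ∞) h)
    (hc : HasCompactSupport h) (ℓ : Fin n) : ∫ q : Coord n, pd ℓ h q = 0 := by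
  have hcont : Continuous (fun q => fderiv ℝ h q (Pi.single ℓ 1)) :=
    (ContinuousLinearMap.apply ℝ ℝ (Pi.single ℓ 1)).continuous.comp (hs.continuous_fderiv (by simp))
  have h1 : Integrable (fun q : Coord n => fderiv ℝ h q (Pi.single ℓ 1) * 1) := by
    simpa using hcont.integrable_of_hasCompactSupport (hc.fderiv_apply ℝ (Pi.single ℓ 1))
  have h2 : Integrable
      (fun q : Coord n => h q * fderiv ℝ (fun _ : Coord n => (1:ℝ)) q (Pi.single ℓ 1)) := by
    simpa [fderiv_const] using (integrable_zero _ _ _ : Integrable (fun _ : Coord n => (0:ℝ)))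
  have h3 : Integrable (fun q : Coord n => h q * 1) := by
    simpa using hs.continuous.integrable_of_hasCompactSupport hc
  have := integral_mul_fderiv_eq_neg_fderiv_mul_of_integrable (f := h)
    (g := fun _ : Coord n => (1:ℝ)) (v := Pi.single ℓ 1) (μ := volume) h1 h2 h3
    (fun x _ => hs.differentiable (by simp) x) (fun x _ => differentiable_const (1:ℝ) x)
  simp only [fderiv_fun_const, Pi.zero_apply, ContinuousLinearMap.zero_apply, mul_zero,
    mul_one] at this
  rw [integral_zero] at this
  simpa [pd] using this.symm

/-- Product rule for `pd`. -/
theorem pd_mul {n : ℕ} (ℓ : Fin n) (f g : Coord n → ℝ) (q : Coord n)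
    (hf : DifferentiableAt ℝ f q) (hg : DifferentiableAt ℝ g q) :
    pd ℓ (fun x => f x * g x) q = pd ℓ f q * g q + f q * pd ℓ g q := by
  simp only [pd, fderiv_fun_mul hf hg, ContinuousLinearMap.add_apply,
    ContinuousLinearMap.smul_apply, smul_eq_mul]
  ring

/-- **The dual of the left action of `𝔫` on `𝔰`.**
In the matched pair `𝔗Q = 𝔰 ⋈ 𝔫` with dual decomposition `𝔗*Q = 𝔰* ⊕ 𝔫*`,
the right action of `X = Σ_{k≥2} X^k ∈ 𝔫` on `(ρ, M) ∈ 𝔰*` dual to the left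
action `X ▷ (σ, Y) = (0, [X², σ])`, i.e. the map determined by
`⟨(ρ, M) ⋆◁ X, (σ, Y)⟩ = ⟨(ρ, M), X ▷ (σ, Y)⟩`, is given by
`(ρ, M) ⋆◁ X = (−X² ∗ M − div X² ⌟ M, 0)`.
(Here `[X², σ] = 2 X^{iℓ} σ_{,ℓ} ∂_{q^i}`, the pairing of `𝔰* = C^∞(Q) ⊕ Λ¹(Q)`
with `𝔰 = C^∞(Q) ⋊ 𝔛(Q)` is `⟨(ρ, M), (σ, Y)⟩ = ∫_Q (ρ σ + M_i Y^i) dq`, and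
only the `X²` component of `X` acts.) -/
theorem dual_action_on_compressible_fluid_variables
    (n : ℕ) (X2 : TF2 n)
    (hXsm : ∀ I, ContDiff ℝ (⊤ : ℕ∞) (fun q => X2 q I))
    (hXsym : ∀ q i ℓ, X2 q ![i, ℓ] = X2 q ![ℓ, i])
    (ρ : Coord n → ℝ) (M : Coord n → Coord n)
    (hM : ContDiff ℝ (⊤ : ℕ∞) M) (hMc : HasCompactSupport M)
    (σ : Coord n → ℝ) (Yv : Coord n → Coord n)
    (hσ : ContDiff ℝ (⊤ : ℕ∞) σ) (hYv : ContDiff ℝ (⊤ : ℕ∞) Yv) :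
    -- `⟨(−X² ∗ M − div X² ⌟ M, 0), (σ, Y)⟩ = ⟨(ρ, M), (0, [X², σ])⟩`
    (∫ q : Coord n,
        ((-(astM X2 M q) - divContrM X2 M q) * σ q + ∑ i : Fin n, 0 * Yv q i))
      = ∫ q : Coord n,
          (ρ q * 0 + ∑ i : Fin n, M q i * (2 * ∑ ℓ : Fin n, X2 q ![i, ℓ] * pd ℓ σ q)) := by
  classical
  have hMi : ∀ i, ContDiff ℝ (⊤ : ℕ∞) (fun q => M q i) := fun i => (contDiff_pi.mp hM i)
  have hMci : ∀ i, HasCompactSupport (fun q => M q i) := fun i =>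
    hMc.comp_left (g := fun v : Coord n => v i) rfl
  -- the auxiliary functions whose divergences we integrate
  set h : Fin n → Fin n → Coord n → ℝ := fun i ℓ q => X2 q ![i, ℓ] * (M q i * σ q) with hh
  have hhs : ∀ i ℓ, ContDiff ℝ (⊤ : ℕ∞) (h i ℓ) := fun i ℓ => (hXsm ![i, ℓ]).mul ((hMi i).mul hσ)
  have hhc : ∀ i ℓ, HasCompactSupport (h i ℓ) := fun i ℓ => ((hMci i).mul_right).mul_left
  -- continuity of pd of smooth functions
  have hpdc : ∀ (f : Coord n → ℝ), ContDiff ℝ (⊤ : ℕ∞) f → ∀ ℓ, Continuous (pd ℓ f) := by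
    intro f hf ℓ
    exact (ContinuousLinearMap.apply ℝ ℝ (Pi.single ℓ 1)).continuous.comp
      (hf.continuous_fderiv (by simp))
  -- integrability of each divergence term
  have hint : ∀ i ℓ, Integrable (fun q => pd ℓ (h i ℓ) q) := fun i ℓ =>
    (hpdc _ (hhs i ℓ) ℓ).integrable_of_hasCompactSupport ((hhc i ℓ).fderiv_apply ℝ _)
  have hkey : ∀ i ℓ, (∫ q : Coord n, pd ℓ (h i ℓ) q) = 0 := fun i ℓ =>
    integral_pd_eq_zero n (h i ℓ) (hhs i ℓ) (hhc i ℓ) ℓ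
  -- symmetric rewriting of divContrM
  have hdiv : ∀ q, divContrM X2 M q
      = 2 * ∑ i : Fin n, ∑ ℓ : Fin n, pd ℓ (fun q' => X2 q' ![i, ℓ]) q * M q i := by
    intro q
    unfold divContrM
    congr 1
    refine Finset.sum_congr rfl fun i _ => Finset.sum_congr rfl fun ℓ _ => ?_
    have : (fun q' => X2 q' ![ℓ, i]) = fun q' => X2 q' ![i, ℓ] :=
      funext fun q' => (hXsym q' i ℓ).symm
    rw [this]
  -- the pointwise divergence identity
  have hpt : ∀ q : Coord n,
      (∑ i : Fin n, ∑ ℓ : Fin n, 2 * pd ℓ (h i ℓ) q)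
        = (astM X2 M q + divContrM X2 M q) * σ q
          + ∑ i : Fin n, M q i * (2 * ∑ ℓ : Fin n, X2 q ![i, ℓ] * pd ℓ σ q) := by
    intro q
    have hps : ∀ i ℓ, pd ℓ (h i ℓ) q
        = pd ℓ (fun q' => X2 q' ![i, ℓ]) q * (M q i * σ q)
          + X2 q ![i, ℓ] * (pd ℓ (fun q' => M q' i) q * σ q + M q i * pd ℓ σ q) := by
      intro i ℓ
      rw [hh]
      rw [pd_mul ℓ (fun q' => X2 q' ![i, ℓ]) (fun q' => M q' i * σ q') q
        ((hXsm ![i, ℓ]).differentiable (by simp) q)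
        (((hMi i).mul hσ).differentiable (by simp) q)]
      rw [pd_mul ℓ (fun q' => M q' i) σ q
        ((hMi i).differentiable (by simp) q) (hσ.differentiable (by simp) q)]
    rw [hdiv]
    unfold astM
    simp only [hps]
    rw [add_mul]
    simp only [Finset.mul_sum, Finset.sum_mul, ← Finset.sum_add_distrib]
    refine Finset.sum_congr rfl fun i _ => Finset.sum_congr rfl fun ℓ _ => ?_
    ring
  -- integrability of the "boundary-free" pieces
  have hcA : Continuous fun q => (astM X2 M q + divContrM X2 M q) * σ q := by
    have h1 : Continuous (astM X2 M) := by
      unfold astM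
      exact continuous_const.mul (continuous_finset_sum _ fun i _ =>
        continuous_finset_sum _ fun ℓ _ =>
          ((hXsm ![i, ℓ]).continuous.mul (hpdc _ (hMi i) ℓ)))
    have h2 : Continuous (divContrM X2 M) := by
      unfold divContrM
      exact continuous_const.mul (continuous_finset_sum _ fun i _ =>
        continuous_finset_sum _ fun ℓ _ =>
          ((hpdc _ (hXsm ![ℓ, i]) ℓ).mul (hMi i).continuous))
    exact (h1.add h2).mul hσ.continuous
  have hsuppA : HasCompactSupport fun q => (astM X2 M q + divContrM X2 M q) * σ q := by
    refine HasCompactSupport.intro hMc ?_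
    intro q hq
    have hM0 : ∀ i, M q i = 0 := by
      intro i
      have : M q = 0 := image_eq_zero_of_notMem_tsupport hq
      simp [this]
    have hpdM0 : ∀ i ℓ, pd ℓ (fun q' => M q' i) q = 0 := by
      intro i ℓ
      have hsub : tsupport (fun q' => M q' i) ⊆ tsupport M := by
        apply closure_mono
        intro x hx
        simp only [Function.mem_support] at hx ⊢
        intro hMx
        exact hx (by simp [hMx])
      have hq' : q ∉ tsupport (fun q' => M q' i) := fun hmem => hq (hsub hmem)
      have : fderiv ℝ (fun q' => M q' i) q = 0 := by
        by_contra hne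
        exact hq' (support_fderiv_subset ℝ (by simpa [Function.mem_support] using hne))
      simp [pd, this]
    unfold astM divContrM
    simp [hM0, hpdM0]
  have hIA : Integrable fun q : Coord n => (astM X2 M q + divContrM X2 M q) * σ q :=
    hcA.integrable_of_hasCompactSupport hsuppA
  have hIS : Integrable fun q : Coord n => ∑ i : Fin n, ∑ ℓ : Fin n, 2 * pd ℓ (h i ℓ) q := by
    refine integrable_finset_sum _ fun i _ => integrable_finset_sum _ fun ℓ _ => ?_
    exact (hint i ℓ).const_mul 2
  -- integral of the divergence sum vanishes
  have hS0 : (∫ q : Coord n, ∑ i : Fin n, ∑ ℓ : Fin n, 2 * pd ℓ (h i ℓ) q) = 0 := by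
    rw [integral_finset_sum _ fun i _ => integrable_finset_sum _ fun ℓ _ =>
      (hint i ℓ).const_mul 2]
    refine Finset.sum_eq_zero fun i _ => ?_
    rw [integral_finset_sum _ fun ℓ _ => (hint i ℓ).const_mul 2]
    refine Finset.sum_eq_zero fun ℓ _ => ?_
    rw [integral_const_mul, hkey i ℓ, mul_zero]
  -- put it together
  have e1 : (fun q : Coord n =>
        ρ q * 0 + ∑ i : Fin n, M q i * (2 * ∑ ℓ : Fin n, X2 q ![i, ℓ] * pd ℓ σ q))
      = fun q : Coord n =>
        (∑ i : Fin n, ∑ ℓ : Fin n, 2 * pd ℓ (h i ℓ) q)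
          - (astM X2 M q + divContrM X2 M q) * σ q := by
    funext q
    have := hpt q
    rw [mul_zero, zero_add]
    linarith
  have e2 : (fun q : Coord n =>
        (-(astM X2 M q) - divContrM X2 M q) * σ q + ∑ i : Fin n, 0 * Yv q i)
      = fun q : Coord n => -((astM X2 M q + divContrM X2 M q) * σ q) := by
    funext q
    simp only [zero_mul, Finset.sum_const_zero, add_zero]
    ring
  rw [e1, e2, integral_sub hIS hIA, hS0, integral_neg, zero_sub]

end
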